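/- Let I be an NAE3SAT instance over a finite variable set X, where each clause is an ordered triple of literals whose underlying variables are pairwise distinct, and assume: (i) every partial function from at most 2 elements of X to Bool extends to an assignment NAE-satisfying I; (ii) for all literals ℓ, ℓ' appearing in distinct clauses c, d of I, every consistent assignment of Boolean values to ℓ and ℓ' extends to an assignment NAE-satisfying I under which ℓ takes a majority value in c; (iii) for every literal ℓ occurring in a clause c such that the negation ¬ℓ occurs in a clause d, there is an assignment NAE-satisfying I under which ℓ takes a majority value in c and ¬ℓ takes a majority value in d; (iv) for each clause of I, every assignment of Boolean values to its three literals whose three values are not all equal extends to an assignment NAE-satisfying I. Then the graph 𝔾(I) is 2-robustly 3-colourable: for every partial function p defined on at most two vertices of 𝔾(I) with values in Fin 3 that assigns distinct values to any two adjacent vertices in its domain, there is a proper 3-colouring of 𝔾(I) extending p. -/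

import Mathlib

/-- A literal over variable set `X`: a variable with a sign (`true` = positive). -/
abbrev NLit (X : Type) := X × Bool

/-- A clause: an ordered triple of literals. -/
abbrev NClause (X : Type) := Fin 3 → NLit X

/-- The value of a literal under an assignment. -/
def nlitVal {X : Type} (ν : X → Bool) (l : NLit X) : Bool :=
  if l.2 then ν l.1 else !(ν l.1)

/-- `ν` NAE-satisfies the instance `I` if on every clause the three literal values are
not all equal. -/
def NAESat3 {X : Type} (I : Finset (NClause X)) (ν : X → Bool) : Prop :=
  ∀ e ∈ I, ¬(nlitVal ν (e 0) = nlitVal ν (e 1) ∧ nlitVal ν (e 1) = nlitVal ν (e 2))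

/-- The `i`-th literal of the clause `e` takes a majority value in `e` under `ν`: its
value equals the value of at least two of the three literals of `e`. -/
def nMajority {X : Type} (ν : X → Bool) (e : NClause X) (i : Fin 3) : Prop :=
  2 ≤ (if nlitVal ν (e 0) = nlitVal ν (e i) then 1 else 0) +
      (if nlitVal ν (e 1) = nlitVal ν (e i) then 1 else 0) +
      (if nlitVal ν (e 2) = nlitVal ν (e i) then 1 else 0)

/-- The vertices of the graph `𝔾(I)`: a special vertex (`Sum.inl`), the literal vertices,
the clause position vertices, and the connector vertices. -/
abbrev GVert {X : Type} (I : Finset (NClause X)) : Type :=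
  Unit ⊕ (X × Bool) ⊕ ({e : NClause X // e ∈ I} × Fin 3) ⊕ ({e : NClause X // e ∈ I} × Fin 3)

/-- The base edge relation of `𝔾(I)`. -/
def gRel {X : Type} (I : Finset (NClause X)) : GVert I → GVert I → Prop
  | Sum.inl _, Sum.inr (Sum.inl _) => True
  | Sum.inr (Sum.inl (v, s)), Sum.inr (Sum.inl (v', s')) => v = v' ∧ s ≠ s'
  | Sum.inr (Sum.inl l), Sum.inr (Sum.inr (Sum.inl (e, i))) => l = e.1 i
  | Sum.inr (Sum.inl l), Sum.inr (Sum.inr (Sum.inr (e, i))) => l = e.1 i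
  | Sum.inr (Sum.inr (Sum.inl (e, _))), Sum.inr (Sum.inr (Sum.inl (e', _))) => e = e'
  | Sum.inr (Sum.inr (Sum.inr (e, i))), Sum.inr (Sum.inr (Sum.inl (e', i'))) =>
      e = e' ∧ i = i'
  | _, _ => False

/-- The graph `𝔾(I)` constructed from an NAE3SAT instance `I`. -/
def GI {X : Type} (I : Finset (NClause X)) : SimpleGraph (GVert I) :=
  SimpleGraph.fromRel (gRel I)

/-!
An NAE-satisfying assignment `ν`, together with a tie-break in every clause, induces a proper
3-colouring of `𝔾(I)`: `a` gets colour `2` and each literal vertex the colour of its value; in each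
clause the position of the minority literal is forced to the colour of the majority value, the two
majority positions get `2` and the colour of the minority value in the order given by the
tie-break, and each connector gets the remaining colour. Conditions (i)–(iv) are what it takes to
find, for two non-adjacent vertices, an induced colouring giving them the same colour, and for two
distinct vertices, one giving them different colours. Composing with a permutation of `Fin 3` then
realises any proper precolouring of two vertices.
-/

lemma exists_perm_apply_pair {α : Type*} [DecidableEq α] {a b a' b' : α}
    (h : a = b ↔ a' = b') : ∃ π : Equiv.Perm α, π a = a' ∧ π b = b' := by
  by_cases hab : a = b
  · subst hab
    obtain rfl := h.mp rfl
    exact ⟨Equiv.swap a a', by simp, by simp⟩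
  · have hab' : a' ≠ b' := mt h.mpr hab
    set σ := Equiv.swap a a'
    have hσb : σ b ≠ a' := fun h =>
      hab (σ.injective (h.trans (Equiv.swap_apply_left a a').symm)).symm
    refine ⟨σ.trans (Equiv.swap (σ b) b'), ?_, by simp⟩
    simp only [Equiv.trans_apply, σ, Equiv.swap_apply_left]
    exact Equiv.swap_apply_of_ne_of_ne (Ne.symm hσb) hab'

lemma exists_coloring_extending_pair {V α : Type*} [DecidableEq α] {G : SimpleGraph V}
    {c : V → α} (hc : ∀ x y, G.Adj x y → c x ≠ c y) {u v : V} {a b : α}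
    (h : c u = c v ↔ a = b) :
    ∃ c' : V → α, (∀ x y, G.Adj x y → c' x ≠ c' y) ∧ c' u = a ∧ c' v = b :=
  let ⟨π, hu, hv⟩ := exists_perm_apply_pair h
  ⟨π ∘ c, fun x y hxy => (hc x y hxy).comp π.injective.eq_iff.mp, hu, hv⟩

lemma exists_fun_apply_pair_of_ne {α β : Type*} {a a' : α} (h : a ≠ a') {P Q : β → Prop}
    (hP : ∃ x, P x) (hQ : ∃ y, Q y) : ∃ f : α → β, P (f a) ∧ Q (f a') := by
  classical
  obtain ⟨x, hx⟩ := hP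
  obtain ⟨y, hy⟩ := hQ
  exact ⟨Function.update (fun _ => y) a x, by simpa, by simpa [Ne.symm h]⟩

def boolColor (b : Bool) : Fin 3 := if b then 1 else 0

lemma boolColor_injective : Function.Injective boolColor := by decide

lemma boolColor_ne_two (b : Bool) : boolColor b ≠ 2 := by cases b <;> decide

-- In `Fin 3` the three colours sum to `0`.
def thirdColor (a b : Fin 3) : Fin 3 := -(a + b)

lemma thirdColor_ne_left {a b : Fin 3} : a ≠ b → thirdColor a b ≠ a := by revert a b; decide

lemma thirdColor_ne_right {a b : Fin 3} : a ≠ b → thirdColor a b ≠ b := by revert a b; decide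

def majority (b : Fin 3 → Bool) : Bool := if b 0 = b 1 then b 0 else b 2

def NotAllEqual (b : Fin 3 → Bool) : Prop := ¬(b 0 = b 1 ∧ b 1 = b 2)

instance (b : Fin 3 → Bool) : Decidable (NotAllEqual b) :=
  inferInstanceAs (Decidable ¬(_ ∧ _))

def firstMajorityIndex (b : Fin 3 → Bool) : Fin 3 := if b 0 = majority b then 0 else 1

def posColor (b : Fin 3 → Bool) (t : Bool) (i : Fin 3) : Fin 3 :=
  if b i = majority b then
    if (i = firstMajorityIndex b ↔ t = true) then 2 else boolColor (!majority b)
  else boolColor (majority b)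

def connColor (b : Fin 3 → Bool) (t : Bool) (i : Fin 3) : Fin 3 :=
  thirdColor (boolColor (b i)) (posColor b t i)

lemma posColor_injective : ∀ {b : Fin 3 → Bool}, NotAllEqual b → ∀ t,
    Function.Injective (posColor b t) := by decide

lemma posColor_ne_boolColor : ∀ b t i, posColor b t i ≠ boolColor (b i) := by decide

lemma connColor_ne_boolColor (b : Fin 3 → Bool) (t : Bool) (i : Fin 3) :
    connColor b t i ≠ boolColor (b i) :=
  thirdColor_ne_left (posColor_ne_boolColor b t i).symm

lemma connColor_ne_posColor (b : Fin 3 → Bool) (t : Bool) (i : Fin 3) :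
    connColor b t i ≠ posColor b t i :=
  thirdColor_ne_right (posColor_ne_boolColor b t i).symm

lemma exists_posColor_eq_boolColor_not : ∀ b i, ∃ t, posColor b t i = boolColor (!b i) := by
  decide

lemma exists_posColor_eq_two : ∀ {b i}, b i = majority b → ∃ t, posColor b t i = 2 := by
  decide

lemma exists_connColor_eq_two : ∀ b i, ∃ t, connColor b t i = 2 := by decide

lemma exists_connColor_eq_boolColor_not :
    ∀ {b i}, b i = majority b → ∃ t, connColor b t i = boolColor (!b i) := by decide

lemma exists_posColor_eq_connColor : ∀ {i j : Fin 3}, i ≠ j →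
    ∃ b t, NotAllEqual b ∧ posColor b t i = connColor b t j := by decide

lemma exists_posColor_ne_connColor : ∀ i j : Fin 3,
    ∃ b t, NotAllEqual b ∧ posColor b t i ≠ connColor b t j := by decide

lemma exists_connColor_eq_connColor : ∀ {i j : Fin 3}, i ≠ j →
    ∃ b t, NotAllEqual b ∧ connColor b t i = connColor b t j := by decide

lemma exists_connColor_ne_connColor : ∀ {i j : Fin 3}, i ≠ j →
    ∃ b t, NotAllEqual b ∧ connColor b t i ≠ connColor b t j := by decide

lemma exists_notAllEqual_majority_true :
    ∀ i : Fin 3, ∃ b, NotAllEqual b ∧ b i = majority b ∧ b i = true := by decide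

lemma exists_notAllEqual_majority_true_and : ∀ {i j : Fin 3}, i ≠ j → ∀ x : Bool,
    ∃ b, NotAllEqual b ∧ b i = majority b ∧ b i = true ∧ b j = x := by decide

lemma two_le_count_eq_iff_eq_majority : ∀ (b : Fin 3 → Bool) (i : Fin 3),
    2 ≤ (if b 0 = b i then 1 else 0) + (if b 1 = b i then 1 else 0) +
      (if b 2 = b i then 1 else 0) ↔ b i = majority b := by decide

section Literals

variable {X : Type} (ν : X → Bool)

lemma nlitVal_eq_beq (l : NLit X) : nlitVal ν l = (ν l.1 == l.2) := by
  obtain ⟨w, s⟩ := l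
  cases s <;> cases hw : ν w <;> simp [nlitVal, hw]

lemma nlitVal_eq_not_of_fst_eq {l l' : NLit X} (hw : l.1 = l'.1) (hs : l.2 ≠ l'.2) :
    nlitVal ν l = !nlitVal ν l' := by
  obtain ⟨w, s⟩ := l
  obtain ⟨w', s'⟩ := l'
  cases hw
  cases s <;> cases s' <;> simp_all [nlitVal]

lemma nlitVal_eq_false_of_fst_eq {l l' : NLit X} (hw : l.1 = l'.1)
    (h : nlitVal ν l' = (l.2 != l'.2)) : nlitVal ν l = false := by
  obtain ⟨w, s⟩ := l
  obtain ⟨w', s'⟩ := l'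
  cases hw
  cases s <;> cases s' <;> cases hw : ν w <;> simp_all [nlitVal]

def clauseValues (e : NClause X) : Fin 3 → Bool := fun j => nlitVal ν (e j)

lemma clauseValues_update_of_forall_ne [DecidableEq X] {e : NClause X} {w : X}
    (h : ∀ j, (e j).1 ≠ w) (c : Bool) : clauseValues (Function.update ν w c) e = clauseValues ν e :=
  funext fun j => by simp [clauseValues, nlitVal, Function.update_of_ne (h j)]

lemma clauseValues_apply (e : NClause X) (j : Fin 3) : clauseValues ν e j = nlitVal ν (e j) :=
  rfl

lemma nMajority_iff (e : NClause X) (i : Fin 3) :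
    nMajority ν e i ↔ clauseValues ν e i = majority (clauseValues ν e) :=
  two_le_count_eq_iff_eq_majority (clauseValues ν e) i

end Literals

section Conditions

variable {X : Type} (I : Finset (NClause X))

def PairExtendable : Prop :=
  ∀ x y : X, ∀ bx by' : Bool, (x = y → bx = by') →
    ∃ ν : X → Bool, NAESat3 I ν ∧ ν x = bx ∧ ν y = by'

def MajorityExtendable : Prop :=
  ∀ c ∈ I, ∀ d ∈ I, c ≠ d → ∀ i i' : Fin 3, ∀ bv bw : Bool,
    (c i = d i' → bv = bw) → ((c i).1 = (d i').1 → (c i).2 ≠ (d i').2 → bv = !bw) →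
    ∃ ν : X → Bool, NAESat3 I ν ∧ nlitVal ν (c i) = bv ∧ nlitVal ν (d i') = bw ∧
      nMajority ν c i

def ComplementsMajority : Prop :=
  ∀ c ∈ I, ∀ d ∈ I, ∀ i i' : Fin 3,
    (c i).1 = (d i').1 → (c i).2 ≠ (d i').2 →
    ∃ ν : X → Bool, NAESat3 I ν ∧ nMajority ν c i ∧ nMajority ν d i'

def ClauseExtendable : Prop :=
  ∀ e ∈ I, ∀ b : Fin 3 → Bool, ¬(b 0 = b 1 ∧ b 1 = b 2) →
    ∃ ν : X → Bool, NAESat3 I ν ∧ ∀ i : Fin 3, nlitVal ν (e i) = b i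

variable {I}

lemma NAESat3.notAllEqual {ν : X → Bool} (hν : NAESat3 I ν) {e : NClause X} (he : e ∈ I) :
    NotAllEqual (clauseValues ν e) :=
  hν e he

lemma PairExtendable.exists_naeSat (h1 : PairExtendable I) : ∃ ν, NAESat3 I ν := by
  by_cases hX : Nonempty X
  · obtain ⟨x⟩ := hX
    obtain ⟨ν, hν, -⟩ := h1 x x true true fun _ => rfl
    exact ⟨ν, hν⟩
  · exact ⟨fun x => (hX ⟨x⟩).elim, fun e _ => (hX ⟨(e 0).1⟩).elim⟩

lemma PairExtendable.exists_nlitVal_ne (h1 : PairExtendable I) {l l' : NLit X} (h : l ≠ l') :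
    ∃ ν, NAESat3 I ν ∧ nlitVal ν l = !nlitVal ν l' := by
  by_cases hw : l.1 = l'.1
  · obtain ⟨ν, hν⟩ := h1.exists_naeSat
    exact ⟨ν, hν, nlitVal_eq_not_of_fst_eq ν hw fun hs => h (Prod.ext hw hs)⟩
  · obtain ⟨ν, hν, hw1, hw2⟩ := h1 l.1 l'.1 l.2 (!l'.2) (absurd · hw)
    exact ⟨ν, hν, by simp [nlitVal_eq_beq, hw1, hw2]⟩

lemma PairExtendable.exists_nlitVal_eq (h1 : PairExtendable I) {l l' : NLit X}
    (h : ¬(l.1 = l'.1 ∧ l.2 ≠ l'.2)) : ∃ ν, NAESat3 I ν ∧ nlitVal ν l = nlitVal ν l' := by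
  by_cases hw : l.1 = l'.1
  · obtain rfl : l = l' := Prod.ext hw (not_not.mp fun hs => h ⟨hw, hs⟩)
    obtain ⟨ν, hν⟩ := h1.exists_naeSat
    exact ⟨ν, hν, rfl⟩
  · obtain ⟨ν, hν, hw1, hw2⟩ := h1 l.1 l'.1 l.2 l'.2 (absurd · hw)
    exact ⟨ν, hν, by simp [nlitVal_eq_beq, hw1, hw2]⟩

lemma ClauseExtendable.exists_clauseValues_eq (h4 : ClauseExtendable I) {e : NClause X}
    (he : e ∈ I) {b : Fin 3 → Bool} (hb : NotAllEqual b) :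
    ∃ ν, NAESat3 I ν ∧ clauseValues ν e = b :=
  let ⟨ν, hν, hv⟩ := h4 e he b hb
  ⟨ν, hν, funext hv⟩

lemma ClauseExtendable.exists_majority (h4 : ClauseExtendable I) {e : NClause X} (he : e ∈ I)
    (i : Fin 3) : ∃ ν, NAESat3 I ν ∧ clauseValues ν e i = majority (clauseValues ν e) ∧
      clauseValues ν e i = true := by
  obtain ⟨b, hb, hmaj, htrue⟩ := exists_notAllEqual_majority_true i
  obtain ⟨ν, hν, rfl⟩ := h4.exists_clauseValues_eq he hb
  exact ⟨ν, hν, hmaj, htrue⟩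

end Conditions

section Graph

variable {X : Type} {I : Finset (NClause X)}

abbrev specialV : GVert I := Sum.inl ()

abbrev litV (l : NLit X) : GVert I := Sum.inr (Sum.inl l)

abbrev posV (e : {e // e ∈ I}) (i : Fin 3) : GVert I := Sum.inr (Sum.inr (Sum.inl (e, i)))

abbrev connV (e : {e // e ∈ I}) (i : Fin 3) : GVert I := Sum.inr (Sum.inr (Sum.inr (e, i)))

lemma GI_adj_of_gRel {x y : GVert I} (h : gRel I x y) (hne : x ≠ y) : (GI I).Adj x y :=
  (SimpleGraph.fromRel_adj _ _ _).mpr ⟨hne, Or.inl h⟩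

lemma GI_adj_special_lit (l : NLit X) : (GI I).Adj specialV (litV l) :=
  GI_adj_of_gRel trivial (by simp)

lemma GI_adj_lit_lit {w : X} {s s' : Bool} (h : s ≠ s') :
    (GI I).Adj (litV (w, s)) (litV (w, s')) :=
  GI_adj_of_gRel ⟨rfl, h⟩ (by simpa)

lemma GI_adj_lit_pos (e : {e // e ∈ I}) (i : Fin 3) : (GI I).Adj (litV (e.1 i)) (posV e i) :=
  GI_adj_of_gRel rfl (by simp)

lemma GI_adj_lit_conn (e : {e // e ∈ I}) (i : Fin 3) : (GI I).Adj (litV (e.1 i)) (connV e i) :=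
  GI_adj_of_gRel rfl (by simp)

lemma GI_adj_pos_pos (e : {e // e ∈ I}) {i j : Fin 3} (h : i ≠ j) :
    (GI I).Adj (posV e i) (posV e j) :=
  GI_adj_of_gRel rfl (by simpa)

lemma GI_adj_pos_conn (e : {e // e ∈ I}) (i : Fin 3) : (GI I).Adj (posV e i) (connV e i) :=
  (GI_adj_of_gRel (x := connV e i) (y := posV e i) ⟨rfl, rfl⟩ (by simp)).symm

def inducedColoring (ν : X → Bool) (ch : {e // e ∈ I} → Bool) : GVert I → Fin 3
  | Sum.inl _ => 2
  | Sum.inr (Sum.inl l) => boolColor (nlitVal ν l)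
  | Sum.inr (Sum.inr (Sum.inl (e, i))) => posColor (clauseValues ν e) (ch e) i
  | Sum.inr (Sum.inr (Sum.inr (e, i))) => connColor (clauseValues ν e) (ch e) i

variable {ν : X → Bool} {ch : {e // e ∈ I} → Bool}

@[simp] lemma inducedColoring_lit (l : NLit X) :
    inducedColoring ν ch (litV l : GVert I) = boolColor (nlitVal ν l) := rfl

@[simp] lemma inducedColoring_pos (e : {e // e ∈ I}) (i : Fin 3) :
    inducedColoring ν ch (posV e i) = posColor (clauseValues ν e) (ch e) i := rfl

@[simp] lemma inducedColoring_conn (e : {e // e ∈ I}) (i : Fin 3) :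
    inducedColoring ν ch (connV e i) = connColor (clauseValues ν e) (ch e) i := rfl

lemma inducedColoring_ne_of_gRel (hν : NAESat3 I ν) :
    ∀ x y : GVert I, gRel I x y → x ≠ y → inducedColoring ν ch x ≠ inducedColoring ν ch y := by
  rintro (⟨⟩ | ⟨w, s⟩ | ⟨e, i⟩ | ⟨e, i⟩) (⟨⟩ | ⟨w', s'⟩ | ⟨e', i'⟩ | ⟨e', i'⟩) hr hne <;>
    simp only [gRel] at hr <;> try exact hr.elim
  · exact (boolColor_ne_two _).symm
  · obtain ⟨rfl, hs⟩ := hr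
    simp only [inducedColoring_lit, nlitVal_eq_not_of_fst_eq ν (l := (w, s)) (l' := (w, s')) rfl hs]
    exact boolColor_injective.ne (Bool.not_ne_self _)
  · simp only [inducedColoring_lit, inducedColoring_pos, hr]
    exact (posColor_ne_boolColor (clauseValues ν e') _ i').symm
  · simp only [inducedColoring_lit, inducedColoring_conn, hr]
    exact (connColor_ne_boolColor (clauseValues ν e') _ i').symm
  · subst hr
    exact (posColor_injective (hν.notAllEqual e.2) _).ne fun h => hne (h ▸ rfl)
  · obtain ⟨rfl, rfl⟩ := hr
    exact connColor_ne_posColor _ _ _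

lemma inducedColoring_proper (hν : NAESat3 I ν) (ch : {e // e ∈ I} → Bool) (x y : GVert I)
    (h : (GI I).Adj x y) : inducedColoring ν ch x ≠ inducedColoring ν ch y := by
  obtain ⟨hne, h | h⟩ := (SimpleGraph.fromRel_adj _ _ _).mp h
  · exact inducedColoring_ne_of_gRel hν x y h hne
  · exact (inducedColoring_ne_of_gRel hν y x h hne.symm).symm

variable (I) in
def CanMerge (u v : GVert I) : Prop :=
  ∃ ν ch, NAESat3 I ν ∧ inducedColoring ν ch u = inducedColoring ν ch v

variable (I) in
def CanSeparate (u v : GVert I) : Prop :=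
  ∃ ν ch, NAESat3 I ν ∧ inducedColoring ν ch u ≠ inducedColoring ν ch v

lemma CanMerge.symm {u v : GVert I} : CanMerge I u v → CanMerge I v u
  | ⟨ν, ch, hν, h⟩ => ⟨ν, ch, hν, h.symm⟩

lemma CanSeparate.symm {u v : GVert I} : CanSeparate I u v → CanSeparate I v u
  | ⟨ν, ch, hν, h⟩ => ⟨ν, ch, hν, Ne.symm h⟩

end Graph

section Realizability

variable {X : Type} {I : Finset (NClause X)}

lemma canMerge_self (h1 : PairExtendable I) (u : GVert I) : CanMerge I u u :=
  let ⟨ν, hν⟩ := h1.exists_naeSat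
  ⟨ν, fun _ => true, hν, rfl⟩

lemma canMerge_special_pos (h4 : ClauseExtendable I) (e : {e // e ∈ I}) (i : Fin 3) :
    CanMerge I specialV (posV e i) := by
  obtain ⟨ν, hν, hmaj, -⟩ := h4.exists_majority e.2 i
  obtain ⟨t, ht⟩ := exists_posColor_eq_two hmaj
  exact ⟨ν, fun _ => t, hν, ht.symm⟩

lemma canMerge_special_conn (h1 : PairExtendable I) (e : {e // e ∈ I}) (i : Fin 3) :
    CanMerge I specialV (connV e i) := by
  obtain ⟨ν, hν⟩ := h1.exists_naeSat
  obtain ⟨t, ht⟩ := exists_connColor_eq_two (clauseValues ν e) i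
  exact ⟨ν, fun _ => t, hν, ht.symm⟩

lemma canMerge_lit_lit (h1 : PairExtendable I) {l l' : NLit X}
    (hA : ¬(GI I).Adj (litV l) (litV l')) : CanMerge I (litV l) (litV l') := by
  obtain ⟨w, s⟩ := l
  obtain ⟨w', s'⟩ := l'
  have hl : ¬(w = w' ∧ s ≠ s') := by
    rintro ⟨rfl, hs⟩
    exact hA (GI_adj_lit_lit hs)
  obtain ⟨ν, hν, h⟩ := h1.exists_nlitVal_eq (l := (w, s)) (l' := (w', s')) hl
  exact ⟨ν, fun _ => true, hν, congrArg boolColor h⟩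

lemma canMerge_lit_pos (h1 : PairExtendable I) {l : NLit X} {e : {e // e ∈ I}} {i : Fin 3}
    (hA : ¬(GI I).Adj (litV l) (posV e i)) : CanMerge I (litV l) (posV e i) := by
  obtain ⟨ν, hν, h⟩ := h1.exists_nlitVal_ne fun h : l = e.1 i => hA (h ▸ GI_adj_lit_pos e i)
  obtain ⟨t, ht⟩ := exists_posColor_eq_boolColor_not (clauseValues ν e) i
  refine ⟨ν, fun _ => t, hν, ?_⟩
  rw [inducedColoring_lit, inducedColoring_pos, ht, h, clauseValues_apply]

section LiteralAgainstMajority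

variable {e : {e // e ∈ I}} {i : Fin 3} {l : NLit X}

lemma exists_majority_nlitVal_eq_false_of_not_occurs (h4 : ClauseExtendable I)
    (hl : ∀ d ∈ I, ∀ j, (d j).1 ≠ l.1) :
    ∃ ν, NAESat3 I ν ∧ clauseValues ν e i = majority (clauseValues ν e) ∧
      clauseValues ν e i = true ∧ nlitVal ν l = false := by
  classical
  obtain ⟨ν, hν, hmaj, htrue⟩ := h4.exists_majority e.2 i
  have hsame d (hd : d ∈ I) := clauseValues_update_of_forall_ne ν (hl d hd) (!l.2)
  have hν' : NAESat3 I (Function.update ν l.1 (!l.2)) := fun d hd => by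
    have h := hν.notAllEqual hd
    rwa [← hsame d hd] at h
  refine ⟨_, hν', ?_⟩
  rw [hsame e e.2]
  exact ⟨hmaj, htrue, by simp [nlitVal_eq_beq]⟩

lemma exists_majority_nlitVal_eq_false_of_occurs (h2 : MajorityExtendable I)
    (h4 : ClauseExtendable I) (hi : (e.1 i).1 ≠ l.1) {d : NClause X} (hd : d ∈ I) {j : Fin 3}
    (hj : (d j).1 = l.1) :
    ∃ ν, NAESat3 I ν ∧ clauseValues ν e i = majority (clauseValues ν e) ∧
      clauseValues ν e i = true ∧ nlitVal ν l = false := by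
  by_cases hde : d = e.1
  · subst hde
    obtain ⟨b, hb, hmaj, htrue, hbj⟩ :=
      exists_notAllEqual_majority_true_and (fun h : i = j => hi (h ▸ hj)) (l.2 != (e.1 j).2)
    obtain ⟨ν, hν, rfl⟩ := h4.exists_clauseValues_eq e.2 hb
    exact ⟨ν, hν, hmaj, htrue, nlitVal_eq_false_of_fst_eq ν hj.symm hbj⟩
  · obtain ⟨ν, hν, htrue, hdj, hmaj⟩ := h2 e.1 e.2 d hd (Ne.symm hde) i j true (l.2 != (d j).2)
      (fun h => absurd (h ▸ hj) hi) (fun h => absurd (h.trans hj) hi)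
    exact ⟨ν, hν, (nMajority_iff ν _ _).mp hmaj, htrue, nlitVal_eq_false_of_fst_eq ν hj.symm hdj⟩

lemma exists_majority_nlitVal_eq_false (h2 : MajorityExtendable I) (h4 : ClauseExtendable I)
    (hl : l ≠ e.1 i) :
    ∃ ν, NAESat3 I ν ∧ clauseValues ν e i = majority (clauseValues ν e) ∧
      clauseValues ν e i = true ∧ nlitVal ν l = false := by
  by_cases hi : (e.1 i).1 = l.1
  · obtain ⟨ν, hν, hmaj, htrue⟩ := h4.exists_majority e.2 i
    have hs : l.2 ≠ (e.1 i).2 := fun hs => hl (Prod.ext hi.symm hs)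
    refine ⟨ν, hν, hmaj, htrue, ?_⟩
    rw [nlitVal_eq_not_of_fst_eq ν hi.symm hs, ← clauseValues_apply, htrue]
    rfl
  by_cases hocc : ∃ d ∈ I, ∃ j, (d j).1 = l.1
  · obtain ⟨d, hd, j, hj⟩ := hocc
    exact exists_majority_nlitVal_eq_false_of_occurs h2 h4 hi hd hj
  · push Not at hocc
    exact exists_majority_nlitVal_eq_false_of_not_occurs h4 hocc

end LiteralAgainstMajority

lemma canMerge_lit_conn (h2 : MajorityExtendable I) (h4 : ClauseExtendable I) {l : NLit X}
    {e : {e // e ∈ I}} {i : Fin 3} (hA : ¬(GI I).Adj (litV l) (connV e i)) :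
    CanMerge I (litV l) (connV e i) := by
  obtain ⟨ν, hν, hmaj, htrue, hl⟩ := exists_majority_nlitVal_eq_false h2 h4
    fun h : l = e.1 i => hA (h ▸ GI_adj_lit_conn e i)
  obtain ⟨t, ht⟩ := exists_connColor_eq_boolColor_not hmaj
  refine ⟨ν, fun _ => t, hν, ?_⟩
  rw [inducedColoring_lit, inducedColoring_conn, ht, htrue, hl]
  rfl

lemma canMerge_pos_pos (h1 : PairExtendable I) (h2 : MajorityExtendable I)
    (h3 : ComplementsMajority I) {e e' : {e // e ∈ I}} {i i' : Fin 3}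
    (hA : ¬(GI I).Adj (posV e i) (posV e' i')) : CanMerge I (posV e i) (posV e' i') := by
  by_cases hee : e = e'
  · subst hee
    by_cases hii : i = i'
    · subst hii
      exact canMerge_self h1 _
    · exact absurd (GI_adj_pos_pos e hii) hA
  by_cases hcompl : (e.1 i).1 = (e'.1 i').1 ∧ (e.1 i).2 ≠ (e'.1 i').2
  · obtain ⟨ν, hν, hm, hm'⟩ := h3 e.1 e.2 e'.1 e'.2 i i' hcompl.1 hcompl.2
    obtain ⟨ch, ht, ht'⟩ := exists_fun_apply_pair_of_ne hee
      (exists_posColor_eq_two ((nMajority_iff ν _ _).mp hm))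
      (exists_posColor_eq_two ((nMajority_iff ν _ _).mp hm'))
    exact ⟨ν, ch, hν, ht.trans ht'.symm⟩
  · obtain ⟨ν, hν, hv, hv', -⟩ := h2 e.1 e.2 e'.1 e'.2 (fun h => hee (Subtype.ext h)) i i'
      true true (fun _ => rfl) (fun hw hs => absurd ⟨hw, hs⟩ hcompl)
    obtain ⟨ch, ht, ht'⟩ := exists_fun_apply_pair_of_ne hee
      (exists_posColor_eq_boolColor_not (clauseValues ν e) i)
      (exists_posColor_eq_boolColor_not (clauseValues ν e') i')
    refine ⟨ν, ch, hν, ?_⟩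
    rw [inducedColoring_pos, inducedColoring_pos, ht, ht', clauseValues_apply, clauseValues_apply,
      hv, hv']

lemma canMerge_pos_conn (h4 : ClauseExtendable I) {e e' : {e // e ∈ I}} {i i' : Fin 3}
    (hA : ¬(GI I).Adj (posV e i) (connV e' i')) : CanMerge I (posV e i) (connV e' i') := by
  by_cases hee : e = e'
  · subst hee
    have hii : i ≠ i' := by
      rintro rfl
      exact hA (GI_adj_pos_conn e i)
    obtain ⟨b, t, hb, h⟩ := exists_posColor_eq_connColor hii
    obtain ⟨ν, hν, rfl⟩ := h4.exists_clauseValues_eq e.2 hb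
    exact ⟨ν, fun _ => t, hν, h⟩
  · obtain ⟨ν, hν, hmaj, -⟩ := h4.exists_majority e.2 i
    obtain ⟨ch, ht, ht'⟩ :=
      exists_fun_apply_pair_of_ne hee (exists_posColor_eq_two hmaj) (exists_connColor_eq_two _ i')
    exact ⟨ν, ch, hν, ht.trans ht'.symm⟩

lemma canMerge_conn_conn (h1 : PairExtendable I) (h4 : ClauseExtendable I)
    (e : {e // e ∈ I}) (i : Fin 3) (e' : {e // e ∈ I}) (i' : Fin 3) :
    CanMerge I (connV e i) (connV e' i') := by
  by_cases hee : e = e'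
  · subst hee
    by_cases hii : i = i'
    · subst hii
      exact canMerge_self h1 _
    obtain ⟨b, t, hb, h⟩ := exists_connColor_eq_connColor hii
    obtain ⟨ν, hν, rfl⟩ := h4.exists_clauseValues_eq e.2 hb
    exact ⟨ν, fun _ => t, hν, h⟩
  · obtain ⟨ν, hν⟩ := h1.exists_naeSat
    obtain ⟨ch, ht, ht'⟩ :=
      exists_fun_apply_pair_of_ne hee (exists_connColor_eq_two _ i) (exists_connColor_eq_two _ i')
    exact ⟨ν, ch, hν, ht.trans ht'.symm⟩

lemma canSeparate_special_lit (h1 : PairExtendable I) (l : NLit X) :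
    CanSeparate I specialV (litV l) :=
  let ⟨ν, hν⟩ := h1.exists_naeSat
  ⟨ν, fun _ => true, hν, (boolColor_ne_two _).symm⟩

lemma canSeparate_special_pos (h1 : PairExtendable I) (e : {e // e ∈ I}) (i : Fin 3) :
    CanSeparate I specialV (posV e i) := by
  obtain ⟨ν, hν⟩ := h1.exists_naeSat
  obtain ⟨t, ht⟩ := exists_posColor_eq_boolColor_not (clauseValues ν e) i
  exact ⟨ν, fun _ => t, hν, (boolColor_ne_two _).symm.trans_eq ht.symm⟩

lemma canSeparate_special_conn (h4 : ClauseExtendable I) (e : {e // e ∈ I}) (i : Fin 3) :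
    CanSeparate I specialV (connV e i) := by
  obtain ⟨ν, hν, hmaj, -⟩ := h4.exists_majority e.2 i
  obtain ⟨t, ht⟩ := exists_connColor_eq_boolColor_not hmaj
  exact ⟨ν, fun _ => t, hν, (boolColor_ne_two _).symm.trans_eq ht.symm⟩

lemma canSeparate_lit_lit (h1 : PairExtendable I) {l l' : NLit X} (h : l ≠ l') :
    CanSeparate I (litV l) (litV l') := by
  obtain ⟨ν, hν, hl⟩ := h1.exists_nlitVal_ne h
  refine ⟨ν, fun _ => true, hν, boolColor_injective.ne ?_⟩
  rw [hl]
  exact Bool.not_ne_self _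

lemma canSeparate_lit_pos (h4 : ClauseExtendable I) (l : NLit X) (e : {e // e ∈ I})
    (i : Fin 3) : CanSeparate I (litV l) (posV e i) := by
  obtain ⟨ν, hν, hmaj, -⟩ := h4.exists_majority e.2 i
  obtain ⟨t, ht⟩ := exists_posColor_eq_two hmaj
  exact ⟨ν, fun _ => t, hν, (boolColor_ne_two _).trans_eq ht.symm⟩

lemma canSeparate_lit_conn (h1 : PairExtendable I) (l : NLit X) (e : {e // e ∈ I})
    (i : Fin 3) : CanSeparate I (litV l) (connV e i) := by
  obtain ⟨ν, hν⟩ := h1.exists_naeSat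
  obtain ⟨t, ht⟩ := exists_connColor_eq_two (clauseValues ν e) i
  exact ⟨ν, fun _ => t, hν, (boolColor_ne_two _).trans_eq ht.symm⟩

lemma canSeparate_pos_pos (h1 : PairExtendable I) (h4 : ClauseExtendable I)
    {e e' : {e // e ∈ I}} {i i' : Fin 3} (hne : posV e i ≠ posV e' i') :
    CanSeparate I (posV e i) (posV e' i') := by
  by_cases hee : e = e'
  · subst hee
    obtain ⟨ν, hν⟩ := h1.exists_naeSat
    exact ⟨ν, fun _ => true, hν,
      (posColor_injective (hν.notAllEqual e.2) true).ne fun h => hne (h ▸ rfl)⟩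
  · obtain ⟨ν, hν, hmaj, -⟩ := h4.exists_majority e.2 i
    obtain ⟨ch, ht, ht'⟩ := exists_fun_apply_pair_of_ne hee (exists_posColor_eq_two hmaj)
      (exists_posColor_eq_boolColor_not (clauseValues ν e') i')
    exact ⟨ν, ch, hν, ht.trans_ne ((boolColor_ne_two _).symm.trans_eq ht'.symm)⟩

lemma canSeparate_pos_conn (h1 : PairExtendable I) (h4 : ClauseExtendable I)
    (e : {e // e ∈ I}) (i : Fin 3) (e' : {e // e ∈ I}) (i' : Fin 3) :
    CanSeparate I (posV e i) (connV e' i') := by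
  by_cases hee : e = e'
  · subst hee
    obtain ⟨b, t, hb, h⟩ := exists_posColor_ne_connColor i i'
    obtain ⟨ν, hν, rfl⟩ := h4.exists_clauseValues_eq e.2 hb
    exact ⟨ν, fun _ => t, hν, h⟩
  · obtain ⟨ν, hν⟩ := h1.exists_naeSat
    obtain ⟨ch, ht, ht'⟩ := exists_fun_apply_pair_of_ne hee
      (exists_posColor_eq_boolColor_not (clauseValues ν e) i) (exists_connColor_eq_two _ i')
    exact ⟨ν, ch, hν, ht.trans_ne ((boolColor_ne_two _).trans_eq ht'.symm)⟩

lemma canSeparate_conn_conn (h4 : ClauseExtendable I) {e e' : {e // e ∈ I}} {i i' : Fin 3}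
    (hne : connV e i ≠ connV e' i') : CanSeparate I (connV e i) (connV e' i') := by
  by_cases hee : e = e'
  · subst hee
    obtain ⟨b, t, hb, h⟩ := exists_connColor_ne_connColor fun h : i = i' => hne (h ▸ rfl)
    obtain ⟨ν, hν, rfl⟩ := h4.exists_clauseValues_eq e.2 hb
    exact ⟨ν, fun _ => t, hν, h⟩
  · obtain ⟨ν, hν, hmaj, -⟩ := h4.exists_majority e.2 i
    obtain ⟨ch, ht, ht'⟩ := exists_fun_apply_pair_of_ne hee (exists_connColor_eq_boolColor_not hmaj)
      (exists_connColor_eq_two _ i')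
    exact ⟨ν, ch, hν, ht.trans_ne ((boolColor_ne_two _).trans_eq ht'.symm)⟩

lemma canMerge_of_not_adj (h1 : PairExtendable I) (h2 : MajorityExtendable I)
    (h3 : ComplementsMajority I) (h4 : ClauseExtendable I) {u v : GVert I}
    (hA : ¬(GI I).Adj u v) : CanMerge I u v := by
  rcases u with ⟨⟩ | l | ⟨e, i⟩ | ⟨e, i⟩ <;> rcases v with ⟨⟩ | l' | ⟨e', i'⟩ | ⟨e', i'⟩
  · exact canMerge_self h1 _
  · exact absurd (GI_adj_special_lit l') hA
  · exact canMerge_special_pos h4 e' i'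
  · exact canMerge_special_conn h1 e' i'
  · exact absurd (GI_adj_special_lit l).symm hA
  · exact canMerge_lit_lit h1 hA
  · exact canMerge_lit_pos h1 hA
  · exact canMerge_lit_conn h2 h4 hA
  · exact (canMerge_special_pos h4 e i).symm
  · exact (canMerge_lit_pos h1 (hA ∘ .symm)).symm
  · exact canMerge_pos_pos h1 h2 h3 hA
  · exact canMerge_pos_conn h4 hA
  · exact (canMerge_special_conn h1 e i).symm
  · exact (canMerge_lit_conn h2 h4 (hA ∘ .symm)).symm
  · exact (canMerge_pos_conn h4 (hA ∘ .symm)).symm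
  · exact canMerge_conn_conn h1 h4 e i e' i'

lemma canSeparate_of_ne (h1 : PairExtendable I) (h4 : ClauseExtendable I) {u v : GVert I}
    (hne : u ≠ v) : CanSeparate I u v := by
  rcases u with ⟨⟩ | l | ⟨e, i⟩ | ⟨e, i⟩ <;> rcases v with ⟨⟩ | l' | ⟨e', i'⟩ | ⟨e', i'⟩
  · exact absurd rfl hne
  · exact canSeparate_special_lit h1 l'
  · exact canSeparate_special_pos h1 e' i'
  · exact canSeparate_special_conn h4 e' i'
  · exact (canSeparate_special_lit h1 l).symm
  · exact canSeparate_lit_lit h1 fun h => hne (h ▸ rfl)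
  · exact canSeparate_lit_pos h4 l e' i'
  · exact canSeparate_lit_conn h1 l e' i'
  · exact (canSeparate_special_pos h1 e i).symm
  · exact (canSeparate_lit_pos h4 l' e i).symm
  · exact canSeparate_pos_pos h1 h4 hne
  · exact canSeparate_pos_conn h1 h4 e i e' i'
  · exact (canSeparate_special_conn h4 e i).symm
  · exact (canSeparate_lit_conn h1 l' e i).symm
  · exact (canSeparate_pos_conn h1 h4 e' i' e i).symm
  · exact canSeparate_conn_conn h4 hne

end Realizability

theorem stmt_11 {X : Type} (I : Finset (NClause X))
    -- (i) 2-robust NAE-satisfiability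
    (h1 : ∀ x y : X, ∀ bx by' : Bool, (x = y → bx = by') →
      ∃ ν : X → Bool, NAESat3 I ν ∧ ν x = bx ∧ ν y = by')
    -- (ii) consistent values on literals of distinct clauses, with a majority condition
    (h2 : ∀ c ∈ I, ∀ d ∈ I, c ≠ d → ∀ i i' : Fin 3, ∀ bv bw : Bool,
      (c i = d i' → bv = bw) → ((c i).1 = (d i').1 → (c i).2 ≠ (d i').2 → bv = !bw) →
      ∃ ν : X → Bool, NAESat3 I ν ∧ nlitVal ν (c i) = bv ∧ nlitVal ν (d i') = bw ∧
        nMajority ν c i)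
    -- (iii) a literal and its negation simultaneously in majority position
    (h3 : ∀ c ∈ I, ∀ d ∈ I, ∀ i i' : Fin 3,
      (c i).1 = (d i').1 → (c i).2 ≠ (d i').2 →
      ∃ ν : X → Bool, NAESat3 I ν ∧ nMajority ν c i ∧ nMajority ν d i')
    -- (iv) any not-all-equal pattern on a clause extends
    (h4 : ∀ e ∈ I, ∀ b : Fin 3 → Bool, ¬(b 0 = b 1 ∧ b 1 = b 2) →
      ∃ ν : X → Bool, NAESat3 I ν ∧ ∀ i : Fin 3, nlitVal ν (e i) = b i) :
    ∀ u v : GVert I, ∀ cu cv : Fin 3, (u = v → cu = cv) →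
      ((GI I).Adj u v → cu ≠ cv) →
      ∃ c : GVert I → Fin 3,
        (∀ x y, (GI I).Adj x y → c x ≠ c y) ∧ c u = cu ∧ c v = cv := by
  intro u v cu cv hsame hadj
  obtain ⟨ν, ch, hν, hpattern⟩ : ∃ ν ch, NAESat3 I ν ∧
      (inducedColoring ν ch u = inducedColoring ν ch v ↔ cu = cv) := by
    by_cases hc : cu = cv
    · obtain ⟨ν, ch, hν, h⟩ := canMerge_of_not_adj h1 h2 h3 h4 fun h => hadj h hc
      exact ⟨ν, ch, hν, iff_of_true h hc⟩
    · obtain ⟨ν, ch, hν, h⟩ := canSeparate_of_ne h1 h4 fun h => hc (hsame h)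
      exact ⟨ν, ch, hν, iff_of_false h hc⟩
  exact exists_coloring_extending_pair (inducedColoring_proper hν ch) hpattern
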